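/- Suppose J is naturally monotonically backward separable with representation maps {φ_t}_{t=0}^T and Γ_{x,t} ≠ ∅ for all x ∈ X_t and t ∈ {0,…,T−1}. If F : ℝ^n × {0,…,T} → ℝ satisfies the Generalized Bellman Equation, i.e. F(x,T) = φ_T(x) for all x ∈ X_T and F(x,t) = inf_{u ∈ Γ_{x,t}} φ_t(x, u, F(f(x,u,t), t+1)) for all x ∈ X_t and t ∈ {0,…,T−1}, then F is a value function of the MSOP: for all t ∈ {0,…,T−1} and x ∈ X_t, F(x,t) = inf_{(u(t),…,u(T−1)) ∈ Γ_{x,[t,T−1]}} φ_t(x(t),u(t), φ_{t+1}(x(t+1),u(t+1), …, φ_T(x(T))…)), where x(t) = x and x(k+1) = f(x(k),u(k),k). -/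

import Mathlib

open Set Filter MeasureTheory

/-- `nest φ φT u x t k` is the backward composition of representation maps
`φ t (x t) (u t) (φ (t+1) (x (t+1)) (u (t+1)) (… (φT (x (t+k))) …)))`
with `k` composition steps, terminating at time `t + k`. -/
def nest {α β : Type*} (φ : ℕ → α → β → ℝ → ℝ) (φT : α → ℝ)
    (u : ℕ → β) (x : ℕ → α) : ℕ → ℕ → ℝ
  | t, 0 => φT (x t)
  | t, k + 1 => φ t (x t) (u t) (nest φ φT u x (t + 1) k)

/-- `imSet φ φT X U t k` is the image of the representation map at time `t`
over its domain, where `k` is the number of remaining steps until the terminal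
time `t + k` (so `Image φ_t = imSet φ φT X U t (T - t)` when the horizon is `T`). -/
def imSet {α β : Type*} (φ : ℕ → α → β → ℝ → ℝ) (φT : α → ℝ)
    (X : ℕ → Set α) (U : Set β) : ℕ → ℕ → Set ℝ
  | t, 0 => φT '' X t
  | t, k + 1 =>
      {z | ∃ a ∈ X t, ∃ b ∈ U, ∃ w ∈ imSet φ φT X U (t + 1) k, z = φ t a b w}

/-- `J` is represented on its domain by the representation maps `φ, φT`
(backward composition with horizon `T`). -/
def IsRep {α β : Type*} (T : ℕ) (X : ℕ → Set α) (U : Set β)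
    (J : (ℕ → β) → (ℕ → α) → ℝ) (φ : ℕ → α → β → ℝ → ℝ) (φT : α → ℝ) : Prop :=
  ∀ u x, (∀ t, t < T → u t ∈ U) → (∀ t, t ≤ T → x t ∈ X t) →
    J u x = nest φ φT u x 0 T

/-- each representation map is monotone in its third argument on the image of
the next representation map. -/
def MonoRep {α β : Type*} (T : ℕ) (X : ℕ → Set α) (U : Set β)
    (φ : ℕ → α → β → ℝ → ℝ) (φT : α → ℝ) : Prop :=
  ∀ t, t < T → ∀ a ∈ X t, ∀ b ∈ U,
    ∀ z ∈ imSet φ φT X U (t + 1) (T - (t + 1)),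
      ∀ w ∈ imSet φ φT X U (t + 1) (T - (t + 1)),
        w ≤ z → φ t a b w ≤ φ t a b z

/-- each representation map is strictly monotone in its third argument. -/
def StrictMonoRep {α β : Type*} (T : ℕ) (X : ℕ → Set α) (U : Set β)
    (φ : ℕ → α → β → ℝ → ℝ) (φT : α → ℝ) : Prop :=
  ∀ t, t < T → ∀ a ∈ X t, ∀ b ∈ U,
    ∀ z ∈ imSet φ φT X U (t + 1) (T - (t + 1)),
      ∀ w ∈ imSet φ φT X U (t + 1) (T - (t + 1)),
        w < z → φ t a b w < φ t a b z

/-- each representation map is upper semi-continuous in its third argument along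
monotonically decreasing sequences in the image of the next representation map. -/
def USCRep {α β : Type*} (T : ℕ) (X : ℕ → Set α) (U : Set β)
    (φ : ℕ → α → β → ℝ → ℝ) (φT : α → ℝ) : Prop :=
  ∀ t, t < T → ∀ a ∈ X t, ∀ b ∈ U, ∀ z : ℕ → ℝ,
    (∀ i, z i ∈ imSet φ φT X U (t + 1) (T - (t + 1))) →
    (∀ i, z (i + 1) ≤ z i) →
    ∀ L : ℝ, Tendsto z atTop (nhds L) →
      Tendsto (fun i => φ t a b (z i)) atTop (nhds (φ t a b L))

/-- each representation map has bounded image. -/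
def BddRep {α β : Type*} (T : ℕ) (X : ℕ → Set α) (U : Set β)
    (φ : ℕ → α → β → ℝ → ℝ) (φT : α → ℝ) : Prop :=
  ∀ t, t ≤ T → ∃ R, 0 < R ∧ ∀ z ∈ imSet φ φT X U t (T - t), |z| < R

/-- `GamSeq T f X U x0 s u x` says that the input sequence `(u s, …, u (T-1))`
belongs to `Γ_{x0,[s,T-1]}`, with `x` the corresponding state sequence:
`x s = x0`, `x (t+1) = f (x t) (u t) t`, `u t ∈ Γ_{x t, t}` for `s ≤ t ≤ T-1`. -/
def GamSeq {α β : Type*} (T : ℕ) (f : α → β → ℕ → α) (X : ℕ → Set α)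
    (U : Set β) (x0 : α) (s : ℕ) (u : ℕ → β) (x : ℕ → α) : Prop :=
  x s = x0 ∧ ∀ t, s ≤ t → t < T →
    u t ∈ U ∧ x (t + 1) = f (x t) (u t) t ∧ x (t + 1) ∈ X (t + 1)

/-- `(u,x)` is feasible for the MSOP with horizon `T` initialized at `x0` at time `0`. -/
def Feas {α β : Type*} (T : ℕ) (f : α → β → ℕ → α) (X : ℕ → Set α)
    (U : Set β) (x0 : α) (u : ℕ → β) (x : ℕ → α) : Prop :=
  x 0 = x0 ∧ (∀ t, t ≤ T → x t ∈ X t) ∧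
    ∀ t, t < T → u t ∈ U ∧ x (t + 1) = f (x t) (u t) t

/-- `(u,x)` is feasible for the MSOP with horizon `T` initialized at `x0` at time `s`. -/
def FeasFrom {α β : Type*} (T : ℕ) (f : α → β → ℕ → α) (X : ℕ → Set α)
    (U : Set β) (x0 : α) (s : ℕ) (u : ℕ → β) (x : ℕ → α) : Prop :=
  x s = x0 ∧ (∀ t, s ≤ t → t ≤ T → x t ∈ X t) ∧
    ∀ t, s ≤ t → t < T → u t ∈ U ∧ x (t + 1) = f (x t) (u t) t


/-!
Let `S t a` be the set of tail costs over `Γ_{a,[t,T-1]}`. Splitting off the first input,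
`S t a = ⋃_{b ∈ Γ_{a,t}} φ_t(a, b, ·) '' S (t+1) (f a b t)`. Approximating `inf S (t+1) (f a b t)`
by a decreasing sequence in that set, monotonicity and upper semi-continuity along decreasing
sequences show that `φ_t(a, b, ·)` maps this infimum to the infimum of the image; and the infimum
of a union is the infimum of the infima. Hence `inf S` satisfies the Generalized Bellman Equation,
and backward induction from `t = T` identifies it with `F`.
-/

open Topology

section InfCommute

variable {γ δ : Type*} [ConditionallyCompleteLinearOrder γ] [TopologicalSpace γ] [OrderTopology γ]
  [FirstCountableTopology γ] [Preorder δ] [TopologicalSpace δ] [OrderClosedTopology δ]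

theorem isGLB_image_csInf_of_monotoneOn {g : γ → δ} {S I : Set γ} (hne : S.Nonempty)
    (hbdd : BddBelow S) (hSI : S ⊆ I) (hmono : MonotoneOn g I)
    (husc : ∀ z : ℕ → γ, (∀ i, z i ∈ I) → Antitone z → Tendsto z atTop (𝓝 (sInf S)) →
      Tendsto (g ∘ z) atTop (𝓝 (g (sInf S)))) :
    IsGLB (g '' S) (g (sInf S)) := by
  obtain ⟨z, hanti, hlim, hzS⟩ := exists_seq_tendsto_sInf hne hbdd
  refine ⟨?_, fun c hc => ge_of_tendsto' (husc z (fun i => hSI (hzS i)) hanti hlim)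
    fun i => hc (mem_image_of_mem g (hzS i))⟩
  rintro _ ⟨w, hw, rfl⟩
  -- `sInf S` itself need not lie in `I`, so compare `w` with `min (z i) w ∈ I` instead.
  have hmin : Tendsto (fun i => min (z i) w) atTop (𝓝 (sInf S)) := by
    simpa [min_eq_left (csInf_le hbdd hw)] using hlim.min (tendsto_const_nhds (x := w))
  have hminI : ∀ i, min (z i) w ∈ I := fun i => by
    rcases min_choice (z i) w with h | h <;> rw [h]
    exacts [hSI (hzS i), hSI hw]
  refine le_of_tendsto' (husc _ hminI (fun i j hij => min_le_min_right w (hanti hij)) hmin)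
    fun i => hmono (hminI i) (hSI hw) (min_le_right _ _)

end InfCommute

section TailCosts

variable {α β : Type*} {T : ℕ} {f : α → β → ℕ → α} {X : ℕ → Set α} {U : Set β}
  {φ : ℕ → α → β → ℝ → ℝ} {φT : α → ℝ}

def feasibleInputs (f : α → β → ℕ → α) (X : ℕ → Set α) (U : Set β) (t : ℕ) (a : α) : Set β :=
  {b ∈ U | f a b t ∈ X (t + 1)}

def tailCosts (T : ℕ) (f : α → β → ℕ → α) (X : ℕ → Set α) (U : Set β)
    (φ : ℕ → α → β → ℝ → ℝ) (φT : α → ℝ) (t : ℕ) (a : α) : Set ℝ :=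
  {y | ∃ u xs, GamSeq T f X U a t u xs ∧ y = nest φ φT u xs t (T - t)}

theorem nest_congr {u u' : ℕ → β} {x x' : ℕ → α} :
    ∀ k t, (∀ s, t ≤ s → s < t + k → u s = u' s) → (∀ s, t ≤ s → s ≤ t + k → x s = x' s) →
      nest φ φT u x t k = nest φ φT u' x' t k
  | 0, t, _, hx => by simp only [nest, hx t le_rfl le_rfl]
  | k + 1, t, hu, hx => by
    simp only [nest]
    rw [hx t le_rfl (by omega), hu t le_rfl (by omega),
      nest_congr k (t + 1) (fun s _ _ => hu s (by omega) (by omega))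
        (fun s _ _ => hx s (by omega) (by omega))]

theorem nest_update_succ (u : ℕ → β) (xs : ℕ → α) (t k : ℕ) (a : α) (b : β) :
    nest φ φT (Function.update u t b) (Function.update xs t a) t (k + 1) =
      φ t a b (nest φ φT u xs (t + 1) k) := by
  simp only [nest, Function.update_self]
  exact congrArg _ (nest_congr k (t + 1)
    (fun s hs _ => Function.update_of_ne (by omega) b u)
    (fun s hs _ => Function.update_of_ne (by omega) a xs))

theorem GamSeq.tail {a : α} {t : ℕ} {u : ℕ → β} {xs : ℕ → α}
    (h : GamSeq T f X U a t u xs) : GamSeq T f X U (xs (t + 1)) (t + 1) u xs :=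
  ⟨rfl, fun s hs hsT => h.2 s (by omega) hsT⟩

theorem GamSeq.update {a : α} {b : β} {t : ℕ} {u : ℕ → β} {xs : ℕ → α}
    (hb : b ∈ feasibleInputs f X U t a) (h : GamSeq T f X U (f a b t) (t + 1) u xs) :
    GamSeq T f X U a t (Function.update u t b) (Function.update xs t a) := by
  refine ⟨Function.update_self _ _ _, fun s hs hsT => ?_⟩
  obtain rfl | hlt := hs.eq_or_lt
  · simp only [Function.update_self, Function.update_of_ne (Nat.succ_ne_self t), h.1]
    exact ⟨hb.1, trivial, hb.2⟩
  · simp only [Function.update_of_ne hlt.ne', Function.update_of_ne (by omega : s + 1 ≠ t)]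
    exact h.2 s hlt hsT

theorem tailCosts_self [Nonempty β] (a : α) : tailCosts T f X U φ φT T a = {φT a} := by
  ext y
  simp only [tailCosts, Nat.sub_self, nest, mem_ofPred_eq, mem_singleton_iff]
  constructor
  · rintro ⟨u, xs, hG, rfl⟩
    rw [hG.1]
  · rintro rfl
    exact ⟨fun _ => Classical.ofNonempty, fun _ => a, ⟨rfl, fun s hs hsT => by omega⟩, rfl⟩

theorem tailCosts_eq_biUnion {t : ℕ} (ht : t < T) (a : α) :
    tailCosts T f X U φ φT t a =
      ⋃ b ∈ feasibleInputs f X U t a, φ t a b '' tailCosts T f X U φ φT (t + 1) (f a b t) := by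
  have hk : T - t = T - (t + 1) + 1 := by omega
  ext y
  simp only [mem_iUnion, mem_image, exists_prop]
  constructor
  · rintro ⟨u, xs, hG, rfl⟩
    obtain ⟨hu, hx, hmem⟩ := hG.2 t le_rfl ht
    rw [hG.1] at hx
    refine ⟨u t, ⟨hu, hx ▸ hmem⟩, _, ⟨u, xs, hx ▸ hG.tail, rfl⟩, ?_⟩
    rw [hk, nest, hG.1]
  · rintro ⟨b, hb, _, ⟨u, xs, hG, rfl⟩, rfl⟩
    exact ⟨_, _, hG.update hb, by rw [hk, nest_update_succ]⟩

theorem tailCosts_nonempty [Nonempty β]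
    (hGam : ∀ t, t < T → ∀ a ∈ X t, ∃ b ∈ U, f a b t ∈ X (t + 1)) {t : ℕ} (ht : t ≤ T) :
    ∀ a ∈ X t, (tailCosts T f X U φ φT t a).Nonempty := by
  induction ht using Nat.decreasingInduction with
  | self => exact fun a _ => by simp [tailCosts_self]
  | of_succ t ht IH =>
    intro a ha
    obtain ⟨b, hb, hfb⟩ := hGam t ht a ha
    obtain ⟨w, hw⟩ := IH _ hfb
    rw [tailCosts_eq_biUnion ht]
    exact ⟨_, mem_biUnion ⟨hb, hfb⟩ (mem_image_of_mem _ hw)⟩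

theorem tailCosts_subset_imSet {t : ℕ} (ht : t ≤ T) :
    ∀ a ∈ X t, tailCosts T f X U φ φT t a ⊆ imSet φ φT X U t (T - t) := by
  induction ht using Nat.decreasingInduction with
  | self =>
    rintro a ha _ ⟨u, xs, hG, rfl⟩
    simp only [Nat.sub_self, nest, imSet, hG.1]
    exact mem_image_of_mem φT ha
  | of_succ t ht IH =>
    intro a ha
    rw [tailCosts_eq_biUnion ht, show T - t = T - (t + 1) + 1 by omega]
    intro y hy
    obtain ⟨b, hb, w, hw, rfl⟩ := mem_iUnion₂.mp hy
    exact ⟨a, ha, b, hb.1, w, IH _ hb.2 hw, rfl⟩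

theorem bddBelow_tailCosts (hBdd : BddRep T X U φ φT) {t : ℕ} (ht : t ≤ T) {a : α}
    (ha : a ∈ X t) : BddBelow (tailCosts T f X U φ φT t a) := by
  obtain ⟨R, -, hR⟩ := hBdd t ht
  exact ⟨-R, fun y hy => (abs_lt.mp (hR y (tailCosts_subset_imSet ht a ha hy))).1.le⟩

end TailCosts

theorem GBE_gives_value_function_general
    {n m : ℕ} (T : ℕ)
    (X : ℕ → Set (Fin n → ℝ)) (U : Set (Fin m → ℝ))
    (f : (Fin n → ℝ) → (Fin m → ℝ) → ℕ → (Fin n → ℝ))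
    (φ : ℕ → (Fin n → ℝ) → (Fin m → ℝ) → ℝ → ℝ) (φT : (Fin n → ℝ) → ℝ)
    (hMono : MonoRep T X U φ φT)
    (hUSC : USCRep T X U φ φT) (hBdd : BddRep T X U φ φT)
    (hGam : ∀ t, t < T → ∀ a ∈ X t, ∃ b ∈ U, f a b t ∈ X (t + 1))
    (F : (Fin n → ℝ) → ℕ → ℝ)
    (hFT : ∀ a ∈ X T, F a T = φT a)
    (hF : ∀ t, t < T → ∀ a ∈ X t, F a t =
      sInf {y : ℝ | ∃ b ∈ U, f a b t ∈ X (t + 1) ∧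
        y = φ t a b (F (f a b t) (t + 1))}) :
    ∀ t, t < T → ∀ a ∈ X t, F a t =
      sInf {y : ℝ | ∃ u xs, GamSeq T f X U a t u xs ∧
        y = nest φ φT u xs t (T - t)} := by
  suffices key : ∀ t ≤ T, ∀ a ∈ X t, F a t = sInf (tailCosts T f X U φ φT t a) from
    fun t ht => key t ht.le
  intro t ht
  induction ht using Nat.decreasingInduction with
  | self => intro a ha; rw [tailCosts_self, csInf_singleton, hFT a ha]
  | of_succ t ht IH =>
    intro a ha
    have hstep : ∀ b : feasibleInputs f X U t a,
        IsGLB (φ t a b '' tailCosts T f X U φ φT (t + 1) (f a b t))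
          (φ t a b (F (f a b t) (t + 1))) := fun ⟨b, hb, hfb⟩ => by
      rw [IH _ hfb]
      exact isGLB_image_csInf_of_monotoneOn (tailCosts_nonempty hGam ht _ hfb)
        (bddBelow_tailCosts hBdd ht hfb) (tailCosts_subset_imSet ht _ hfb)
        (fun w hw z hz hwz => hMono t ht a ha b hb z hz w hw hwz)
        (fun z hz hanti => hUSC t ht a ha b hb z hz (fun i => hanti i.le_succ) _)
    have hglb := (isGLB_iUnion_iff_of_isGLB hstep _).2 <| by
      convert isGLB_csInf (tailCosts_nonempty hGam ht.le a ha) (bddBelow_tailCosts hBdd ht.le ha)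
        using 1
      rw [tailCosts_eq_biUnion ht, biUnion_eq_iUnion]
    obtain ⟨b, hb, hfb⟩ := hGam t ht a ha
    rw [hF t ht a ha, ← hglb.csInf_eq ⟨_, mem_range_self ⟨b, hb, hfb⟩⟩]
    congr 1
    ext y
    simp [feasibleInputs, eq_comm, and_assoc]

/-- If the cost is naturally monotonically backward separable,
the feasible input sets are nonempty, and `F` satisfies the Generalized Bellman
Equation, then `F` is a value function of the MSOP: for every `t < T` and
`x ∈ X_t`, `F(x,t)` equals the infimum of the backward-composed tail cost over
all feasible input sequences in `Γ_{x,[t,T-1]}`. -/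
theorem GBE_gives_value_function
    {n m : ℕ} (T : ℕ) (hT : 1 ≤ T)
    (X : ℕ → Set (Fin n → ℝ)) (U : Set (Fin m → ℝ))
    (f : (Fin n → ℝ) → (Fin m → ℝ) → ℕ → (Fin n → ℝ))
    (J : (ℕ → Fin m → ℝ) → (ℕ → Fin n → ℝ) → ℝ)
    (φ : ℕ → (Fin n → ℝ) → (Fin m → ℝ) → ℝ → ℝ) (φT : (Fin n → ℝ) → ℝ)
    (hRep : IsRep T X U J φ φT) (hMono : MonoRep T X U φ φT)
    (hUSC : USCRep T X U φ φT) (hBdd : BddRep T X U φ φT)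
    (hGam : ∀ t, t < T → ∀ a ∈ X t, ∃ b ∈ U, f a b t ∈ X (t + 1))
    (F : (Fin n → ℝ) → ℕ → ℝ)
    (hFT : ∀ a ∈ X T, F a T = φT a)
    (hF : ∀ t, t < T → ∀ a ∈ X t, F a t =
      sInf {y : ℝ | ∃ b ∈ U, f a b t ∈ X (t + 1) ∧
        y = φ t a b (F (f a b t) (t + 1))}) :
    ∀ t, t < T → ∀ a ∈ X t, F a t =
      sInf {y : ℝ | ∃ u xs, GamSeq T f X U a t u xs ∧
        y = nest φ φT u xs t (T - t)} :=
  GBE_gives_value_function_general T X U f φ φT hMono hUSC hBdd hGam F hFT hF
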